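/- (Superadditivity for coprime subsystems.) Let ρ be an n×n positive semidefinite complex matrix. If m₁ and m₂ are divisors of n with gcd(m₁,m₂) = 1, then ℓ̃(m₁m₂|ρ) ≥ ℓ̃(m₁|ρ) + ℓ̃(m₂|ρ), where ℓ̃(k|ρ) = ℓ(k|ρ) − ℓ(1|ρ). -/

import Mathlib

open Matrix BigOperators
open scoped ComplexOrder

/-- The projector `P(m)` onto the position states of subsystem `Σ(m)` embedded in `Σ(n)`:
`P(m) = ∑_{r=0}^{m-1} E_{(n/m)r}` where `E_j` is the diagonal matrix unit at `(j,j)`. -/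
noncomputable def projP (n : ℕ) [NeZero n] (m : ℕ) : Matrix (ZMod n) (ZMod n) ℂ :=
  ∑ r ∈ Finset.range m,
    Matrix.single ((n / m * r : ℕ) : ZMod n) ((n / m * r : ℕ) : ZMod n) (1 : ℂ)

/-- The lower probability `ℓ(m|ρ) = Tr(P(m) ρ)` (a real number). -/
noncomputable def lowerProb (n : ℕ) [NeZero n] (m : ℕ)
    (ρ : Matrix (ZMod n) (ZMod n) ℂ) : ℝ :=
  (Matrix.trace (projP n m * ρ)).re

/-- The negation `¬m = ∏_p p^{v_p(n)}` over primes `p` dividing `n` but not `m`. -/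
def negDiv (n m : ℕ) : ℕ :=
  ∏ p ∈ n.primeFactors.filter (fun p => ¬ p ∣ m), p ^ (n.factorization p)

/-- The upper probability `u(m|ρ) = 1 - ℓ(¬m|ρ) + ℓ(1|ρ)`. -/
noncomputable def upperProb (n : ℕ) [NeZero n] (m : ℕ)
    (ρ : Matrix (ZMod n) (ZMod n) ℂ) : ℝ :=
  1 - lowerProb n (negDiv n m) ρ + lowerProb n 1 ρ

lemma trace_stdBasis_mul {n : ℕ} [NeZero n] (j : ZMod n) (ρ : Matrix (ZMod n) (ZMod n) ℂ) :
    Matrix.trace (Matrix.single j j (1 : ℂ) * ρ) = ρ j j := by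
  rw [Matrix.trace]
  rw [Finset.sum_eq_single j]
  · simp [Matrix.diag]
  · intro b _ hb
    simp [Matrix.diag, Matrix.single_mul_apply_of_ne (h := hb)]
  · simp

/-- The index set of the projector. -/
def idxSet (n m : ℕ) [NeZero n] : Finset (ZMod n) :=
  (Finset.range m).image (fun r => ((n / m * r : ℕ) : ZMod n))

lemma lowerProb_eq_sum {n : ℕ} [NeZero n] (m : ℕ) (hm : m ∣ n)
    (ρ : Matrix (ZMod n) (ZMod n) ℂ) :
    lowerProb n m ρ = ∑ j ∈ idxSet n m, (ρ j j).re := by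
  have hn : 0 < n := Nat.pos_of_ne_zero (NeZero.ne n)
  have hmpos : 0 < m := Nat.pos_of_dvd_of_pos hm hn
  have hlt : ∀ r ∈ Finset.range m, n / m * r < n := by
    intro r hr
    rw [Finset.mem_range] at hr
    calc n / m * r < n / m * m :=
          mul_lt_mul_of_pos_left hr (Nat.div_pos (Nat.le_of_dvd hn hm) hmpos)
      _ = n := Nat.div_mul_cancel hm
  have hinj : Set.InjOn (fun r => ((n / m * r : ℕ) : ZMod n)) (Finset.range m) := by
    intro a ha b hb hab
    have := (ZMod.natCast_eq_natCast_iff' _ _ _).mp hab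
    rw [Nat.mod_eq_of_lt (hlt a ha), Nat.mod_eq_of_lt (hlt b hb)] at this
    have hd : 0 < n / m := Nat.div_pos (Nat.le_of_dvd hn hm) hmpos
    exact Nat.eq_of_mul_eq_mul_left hd this
  rw [idxSet, Finset.sum_image hinj]
  rw [lowerProb, projP, Finset.sum_mul, Matrix.trace_sum, Complex.re_sum]
  refine Finset.sum_congr rfl fun r _ => ?_
  rw [trace_stdBasis_mul]

lemma diag_re_nonneg {n : ℕ} [NeZero n] {ρ : Matrix (ZMod n) (ZMod n) ℂ}
    (hρ : ρ.PosSemidef) (j : ZMod n) : 0 ≤ (ρ j j).re := by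
  have := hρ.dotProduct_mulVec_nonneg (Pi.single j 1)
  have h : star (Pi.single j (1:ℂ)) ⬝ᵥ ρ.mulVec (Pi.single j 1) = ρ j j := by
    simp [dotProduct, Matrix.mulVec, Pi.single_apply,
      apply_ite (star : ℂ → ℂ)]
  have h2 := hρ.dotProduct_mulVec_nonneg (Pi.single j 1)
  rw [h] at h2
  exact (Complex.nonneg_iff.mp h2).1

/-- Superadditivity for coprime subsystems: if `gcd(m₁,m₂) = 1` then
`ℓ̃(m₁m₂|ρ) ≥ ℓ̃(m₁|ρ) + ℓ̃(m₂|ρ)` where `ℓ̃(k|ρ) = ℓ(k|ρ) − ℓ(1|ρ)`. -/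
theorem lowerProb_superadditive (n : ℕ) [NeZero n] (ρ : Matrix (ZMod n) (ZMod n) ℂ)
    (hρ : ρ.PosSemidef) (m₁ m₂ : ℕ) (h₁ : m₁ ∣ n) (h₂ : m₂ ∣ n)
    (hcop : Nat.gcd m₁ m₂ = 1) :
    lowerProb n (m₁ * m₂) ρ - lowerProb n 1 ρ ≥
      (lowerProb n m₁ ρ - lowerProb n 1 ρ) + (lowerProb n m₂ ρ - lowerProb n 1 ρ) := by
  have hn : 0 < n := Nat.pos_of_ne_zero (NeZero.ne n)
  have h12 : m₁ * m₂ ∣ n := (Nat.Coprime.mul_dvd_of_dvd_of_dvd hcop h₁ h₂)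
  have hm₁ : 0 < m₁ := Nat.pos_of_dvd_of_pos h₁ hn
  have hm₂ : 0 < m₂ := Nat.pos_of_dvd_of_pos h₂ hn
  have hlt : ∀ m : ℕ, m ∣ n → 0 < m → ∀ r, r < m → n / m * r < n := by
    intro m hm hmpos r hr
    calc n / m * r < n / m * m :=
          mul_lt_mul_of_pos_left hr (Nat.div_pos (Nat.le_of_dvd hn hm) hmpos)
      _ = n := Nat.div_mul_cancel hm
  -- subset lemma
  have hsub : ∀ (a b : ℕ), a ∣ n → b ∣ n → a * b ∣ n → idxSet n a ⊆ idxSet n (a * b) := by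
    intro a b ha hb hab
    intro x hx
    rw [idxSet, Finset.mem_image] at hx ⊢
    obtain ⟨r, hr, rfl⟩ := hx
    rw [Finset.mem_range] at hr
    refine ⟨b * r, ?_, ?_⟩
    · rw [Finset.mem_range]
      calc b * r < b * a := by
            exact mul_lt_mul_of_pos_left hr (Nat.pos_of_dvd_of_pos hb hn)
        _ = a * b := Nat.mul_comm b a
    · congr 1
      have hba : b ∣ n / a := (Nat.dvd_div_iff_mul_dvd ha).mpr (Nat.mul_comm a b ▸ hab)
      have : n / (a * b) * (b * r) = n / a * r := by
        rw [← Nat.mul_assoc, ← Nat.div_div_eq_div_mul, Nat.div_mul_cancel hba]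
      rw [this]
  have hsub₁ : idxSet n m₁ ⊆ idxSet n (m₁ * m₂) := hsub m₁ m₂ h₁ h₂ h12
  have hsub₂ : idxSet n m₂ ⊆ idxSet n (m₁ * m₂) := by
    rw [Nat.mul_comm]
    exact hsub m₂ m₁ h₂ h₁ (Nat.mul_comm m₁ m₂ ▸ h12)
  -- intersection
  have hzero : ∀ m : ℕ, 0 < m → (0 : ZMod n) ∈ idxSet n m := by
    intro m hm
    rw [idxSet, Finset.mem_image]
    exact ⟨0, Finset.mem_range.mpr hm, by simp⟩
  have hone : idxSet n 1 = {(0 : ZMod n)} := by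
    rw [idxSet]
    simp
  have hinter : idxSet n m₁ ∩ idxSet n m₂ = {(0 : ZMod n)} := by
    apply Finset.Subset.antisymm
    · intro x hx
      rw [Finset.mem_inter] at hx
      obtain ⟨hx₁, hx₂⟩ := hx
      rw [idxSet, Finset.mem_image] at hx₁ hx₂
      obtain ⟨r₁, hr₁, he₁⟩ := hx₁
      obtain ⟨r₂, hr₂, he₂⟩ := hx₂
      rw [Finset.mem_range] at hr₁ hr₂
      have heq : ((n / m₁ * r₁ : ℕ) : ZMod n) = ((n / m₂ * r₂ : ℕ) : ZMod n) := he₁.trans he₂.symm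
      have heqn : n / m₁ * r₁ = n / m₂ * r₂ := by
        have := (ZMod.natCast_eq_natCast_iff' _ _ _).mp heq
        rwa [Nat.mod_eq_of_lt (hlt m₁ h₁ hm₁ r₁ hr₁),
          Nat.mod_eq_of_lt (hlt m₂ h₂ hm₂ r₂ hr₂)] at this
      -- n/m₁ = (n/(m₁ m₂)) * m₂, n/m₂ = (n/(m₁ m₂)) * m₁
      set d := n / (m₁ * m₂) with hd
      have hdpos : 0 < d := Nat.div_pos (Nat.le_of_dvd hn h12) (Nat.mul_pos hm₁ hm₂)
      have hba₁ : m₂ ∣ n / m₁ := (Nat.dvd_div_iff_mul_dvd h₁).mpr h12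
      have hba₂ : m₁ ∣ n / m₂ := (Nat.dvd_div_iff_mul_dvd h₂).mpr (Nat.mul_comm m₁ m₂ ▸ h12)
      have e₁ : n / m₁ = d * m₂ := by
        rw [hd, ← Nat.div_div_eq_div_mul, Nat.div_mul_cancel hba₁]
      have e₂ : n / m₂ = d * m₁ := by
        rw [hd, Nat.mul_comm m₁ m₂, ← Nat.div_div_eq_div_mul, Nat.div_mul_cancel hba₂]
      rw [e₁, e₂, Nat.mul_assoc, Nat.mul_assoc] at heqn
      have h3 : m₂ * r₁ = m₁ * r₂ := Nat.eq_of_mul_eq_mul_left hdpos heqn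
      have hdvd : m₁ ∣ r₁ := by
        have : m₁ ∣ m₂ * r₁ := ⟨r₂, h3⟩
        exact (Nat.Coprime.dvd_of_dvd_mul_left hcop this)
      have : r₁ = 0 := Nat.eq_zero_of_dvd_of_lt hdvd hr₁
      subst this
      rw [Finset.mem_singleton, ← he₁]
      simp
    · intro x hx
      rw [Finset.mem_singleton] at hx
      subst hx
      exact Finset.mem_inter.mpr ⟨hzero m₁ hm₁, hzero m₂ hm₂⟩
  -- rewrite lowerProbs
  rw [lowerProb_eq_sum m₁ h₁, lowerProb_eq_sum m₂ h₂, lowerProb_eq_sum (m₁ * m₂) h12,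
    lowerProb_eq_sum 1 (one_dvd n), hone]
  have hnn : ∀ j ∈ idxSet n (m₁ * m₂), 0 ≤ (ρ j j).re := fun j _ => diag_re_nonneg hρ j
  have hunion : ∑ j ∈ idxSet n m₁ ∪ idxSet n m₂, (ρ j j).re
      = ∑ j ∈ idxSet n m₁, (ρ j j).re + ∑ j ∈ idxSet n m₂, (ρ j j).re
        - ∑ j ∈ ({(0 : ZMod n)} : Finset (ZMod n)), (ρ j j).re := by
    rw [← hinter]
    have := Finset.sum_union_inter (s₁ := idxSet n m₁) (s₂ := idxSet n m₂)
      (f := fun j => (ρ j j).re)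
    linarith
  have hle : ∑ j ∈ idxSet n m₁ ∪ idxSet n m₂, (ρ j j).re
      ≤ ∑ j ∈ idxSet n (m₁ * m₂), (ρ j j).re := by
    apply Finset.sum_le_sum_of_subset_of_nonneg
    · exact Finset.union_subset hsub₁ hsub₂
    · intro j hj _
      exact diag_re_nonneg hρ j
  simp only [Finset.sum_singleton] at *
  linarith
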